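/- For every m, n ∈ ℕ and every f ∈ H^{(m,m)}(Ω), the function C_φ^n f lies in the domain of D_y^m and D_y^m (C_φ^n f) = Σ_{j=0}^{m} binom(m,j) (2n)^{m−j} C_φ^n (D_x^{m−j} D_y^{j} f). (This is the multinomial identity D_y^m C_φ^n = Σ_{|i_{n+1}|=m} 2^{m−i_{n+1}} multinom(m; i₁,…,i_{n+1}) C_φ^n D_x^{m−i_{n+1}} D_y^{i_{n+1}}, with the sum over (n+1)-tuples of nonnegative integers collapsed by the multinomial theorem.) -/

import Mathlib

open MeasureTheory Complex Filter Topology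

noncomputable section

instance : Fact (0 < 2 * Real.pi) := ⟨by positivity⟩
instance : Fact (0 < Real.pi) := ⟨Real.pi_pos⟩

/-- The phase space `Ω = (ℝ/2πℤ) × (ℝ/πℤ)`. -/
abbrev Omg : Type := AddCircle (2 * Real.pi) × AddCircle Real.pi

/-- The normalised Lebesgue measure `dm = dx dy / (2π²)` on `Ω`. -/
def mOmg : Measure Omg := (ENNReal.ofReal (2 * Real.pi ^ 2))⁻¹ • volume

/-- The Fourier basis functions `e_k(x,y) = exp(i k₁ x) exp(2 i k₂ y)`. -/
def eB (k : ℤ × ℤ) : Omg → ℂ := fun p => fourier k.1 p.1 * fourier k.2 p.2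

/-- Fourier coefficient `c_k(f) = (f, e_k)_{L²}`. -/
def coef (k : ℤ × ℤ) (f : Omg → ℂ) : ℂ := ∫ p, f p * (starRingEnd ℂ) (eB k p) ∂mOmg

/-- Sobolev weight `a_s(k) = 1 + |k₁|^{2s₁} + |2k₂|^{2s₂}` (real exponents). -/
def aW (s : ℝ × ℝ) (k : ℤ × ℤ) : ℝ :=
  1 + |(k.1 : ℝ)| ^ (2 * s.1) + |2 * (k.2 : ℝ)| ^ (2 * s.2)

/-- Membership in the Sobolev space `H^s(Ω)`. -/
def MemHs (s : ℝ × ℝ) (f : Omg → ℂ) : Prop :=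
  MemLp f 2 mOmg ∧ Summable (fun k => aW s k * ‖coef k f‖ ^ 2)

/-- The Sobolev norm `‖f‖_{H^s}`. -/
def normHs (s : ℝ × ℝ) (f : Omg → ℂ) : ℝ :=
  Real.sqrt (∑' k, aW s k * ‖coef k f‖ ^ 2)

/-- The doubling map `ℝ/πℤ → ℝ/2πℤ`, `y ↦ 2y`. -/
def dbl : AddCircle Real.pi → AddCircle (2 * Real.pi) :=
  AddCircle.equivAddCircle Real.pi (2 * Real.pi) Real.pi_ne_zero (by positivity)

/-- The inverse billiard collision map `φ(x,y) = (x - π + 2y, y)`. -/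
def phi : Omg → Omg :=
  fun p => (p.1 - ((Real.pi : ℝ) : AddCircle (2 * Real.pi)) + dbl p.2, p.2)

/-- The composition operator `(C_φ f)(x,y) = f(φ(x,y))`. -/
def Cphi : (Omg → ℂ) → (Omg → ℂ) := fun f p => f (phi p)

/-- The multiplication operator `(M_w f)(x,y) = w(x,y) f(x,y)`. -/
def Mw (w : Omg → ℝ) : (Omg → ℂ) → (Omg → ℂ) := fun f p => (w p : ℂ) * f p

/-- The transfer operator `L = M_w C_φ`. -/
def Lop (w : Omg → ℝ) : (Omg → ℂ) → (Omg → ℂ) := fun f => Mw w (Cphi f)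

/-- The frequency cut-off set `Λ_K = {k : |k₁| < K, |k₂| < K}`. -/
def Lam (K : ℕ) : Finset (ℤ × ℤ) := Finset.Ioo (-(K : ℤ)) (K : ℤ) ×ˢ Finset.Ioo (-(K : ℤ)) (K : ℤ)

/-- The Fourier projection `P_Λ f = ∑_{k ∈ Λ} c_k(f) e_k`. -/
def PL (Λ : Finset (ℤ × ℤ)) : (Omg → ℂ) → (Omg → ℂ) :=
  fun f p => ∑ k ∈ Λ, coef k f * eB k p

/-- The finite-rank approximation `L_K = P_K M_w C_φ P_K`. -/
def LK (w : Omg → ℝ) (K : ℕ) : (Omg → ℂ) → (Omg → ℂ) :=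
  fun f => PL (Lam K) (Lop w (PL (Lam K) f))

/-- Operator norm of a map `T`, viewed from `H^s` to `H^t`. -/
def opN (s t : ℝ × ℝ) (T : (Omg → ℂ) → (Omg → ℂ)) : ℝ :=
  sInf {M : ℝ | 0 ≤ M ∧ ∀ f, MemHs s f → normHs t (T f) ≤ M * normHs s f}

/-- `‖w‖_∞` for a (positive bounded) weight. -/
def wSup (w : Omg → ℝ) : ℝ := sSup (Set.range w)

/-- The standing assumptions on the weight `w`: smooth, positive, bounded away from
zero, `‖w‖_∞ < 1`, and independent of the first argument. -/
structure GoodWeight (w : Omg → ℝ) : Prop where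
  pos : ∀ p, 0 < w p
  smooth : ∃ W : ℝ → ℝ, ContDiff ℝ (⊤ : ℕ∞) W ∧
    ∀ (x : AddCircle (2 * Real.pi)) (y : ℝ), w (x, (y : AddCircle Real.pi)) = W y
  bdd_below : ∃ ε > 0, ∀ p, ε ≤ w p
  lt_one : sSup (Set.range w) < 1
  indep : ∀ (x x' : AddCircle (2 * Real.pi)) (y : AddCircle Real.pi), w (x, y) = w (x', y)

/-- The matrix `A = [[1,0],[1,1]]` acting on frequencies `(k₁,k₂) ↦ (k₁, k₁+k₂)`. -/
def Amap : ℤ × ℤ → ℤ × ℤ := fun k => (k.1, k.1 + k.2)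

/-- `IsD i j f g` : `g = D_x^i D_y^j f` in the weak (Fourier) sense, both in `L²`. -/
def IsD (i j : ℕ) (f g : Omg → ℂ) : Prop :=
  MemLp f 2 mOmg ∧ MemLp g 2 mOmg ∧
    ∀ k : ℤ × ℤ, coef k g = (Complex.I * (k.1 : ℂ)) ^ i * (2 * Complex.I * (k.2 : ℂ)) ^ j * coef k f

/-! The symbol of `C_φ` on frequencies is the shear `(k₁, k₂) ↦ (k₁, k₂ - k₁)` up to the sign
`(-1)^{k₁}`, so on the Fourier side `D_y^m C_φ^n` multiplies by `(2i k₂)^m`, evaluated at the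
frequency `(k₁, k₂ - n k₁)` of `f`. Writing `2i k₂ = 2i (k₂ - n k₁) + 2n · i k₁` and expanding by
the binomial theorem gives the identity. -/

def MeasurableEquiv.addShear {G H : Type*} [MeasurableSpace G] [MeasurableSpace H] [AddGroup G]
    [MeasurableAdd₂ G] [MeasurableNeg G] {t : H → G} (ht : Measurable t) : G × H ≃ᵐ G × H where
  toFun p := (p.1 + t p.2, p.2)
  invFun p := (p.1 - t p.2, p.2)
  left_inv p := by simp
  right_inv p := by simp
  measurable_toFun := (measurable_fst.add (ht.comp measurable_snd)).prodMk measurable_snd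
  measurable_invFun := (measurable_fst.sub (ht.comp measurable_snd)).prodMk measurable_snd

lemma MeasurableEquiv.measurePreserving_addShear {G H : Type*} [MeasurableSpace G]
    [MeasurableSpace H] [AddGroup G] [MeasurableAdd₂ G] [MeasurableNeg G] (μ : Measure G)
    (ν : Measure H) [SFinite μ] [SFinite ν] [μ.IsAddRightInvariant] {t : H → G}
    (ht : Measurable t) : MeasurePreserving (addShear ht) (μ.prod ν) (μ.prod ν) := by
  have hskew : MeasurePreserving (fun q : H × G => (q.1, q.2 + t q.1)) (ν.prod μ) (ν.prod μ) :=
    (MeasurePreserving.id ν).skew_product (measurable_snd.add (ht.comp measurable_fst))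
      (ae_of_all _ fun b => (measurePreserving_add_right μ (t b)).map_eq)
  exact Measure.measurePreserving_swap.comp (hskew.comp Measure.measurePreserving_swap)

lemma dbl_coe (y : ℝ) : dbl (y : AddCircle Real.pi) = ((2 * y : ℝ) : AddCircle (2 * Real.pi)) := by
  rw [dbl, AddCircle.equivAddCircle_apply_mk]
  congr 1
  field_simp

lemma continuous_dbl : Continuous dbl :=
  (AddCircle.homeomorphAddCircle Real.pi (2 * Real.pi) Real.pi_ne_zero (by positivity)).continuous

lemma phi_eq_addShear :
    phi = MeasurableEquiv.addShear
      (continuous_dbl.measurable.sub_const (Real.pi : AddCircle (2 * Real.pi))) := by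
  funext p
  simp only [phi, MeasurableEquiv.addShear, MeasurableEquiv.coe_mk, Equiv.coe_fn_mk]
  congr 1
  abel

lemma measurableEmbedding_phi : MeasurableEmbedding phi :=
  phi_eq_addShear ▸ MeasurableEquiv.measurableEmbedding _

lemma measurePreserving_phi : MeasurePreserving phi mOmg mOmg := by
  have hvol : MeasurePreserving phi (volume : Measure Omg) volume := by
    rw [phi_eq_addShear, Measure.volume_eq_prod]
    exact MeasurableEquiv.measurePreserving_addShear _ _ _
  exact ⟨hvol.measurable, by rw [mOmg, Measure.map_smul, hvol.map_eq]⟩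

instance : IsFiniteMeasure mOmg := by
  have : IsFiniteMeasure (volume : Measure Omg) := by
    rw [Measure.volume_eq_prod]
    infer_instance
  constructor
  rw [mOmg, Measure.smul_apply, smul_eq_mul]
  exact ENNReal.mul_lt_top (by simp; positivity) (measure_lt_top _ _)

lemma continuous_eB (k : ℤ × ℤ) : Continuous (eB k) :=
  ((fourier k.1).continuous.comp continuous_fst).mul ((fourier k.2).continuous.comp continuous_snd)

lemma norm_eB (k : ℤ × ℤ) (p : Omg) : ‖eB k p‖ = 1 := by
  rw [eB, norm_mul, fourier_apply, fourier_apply, Circle.norm_coe, Circle.norm_coe, one_mul]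

lemma eB_phi (k : ℤ × ℤ) (p : Omg) :
    eB (k.1, k.2 - k.1) (phi p) = (-1 : ℂ) ^ k.1 * eB k p := by
  obtain ⟨a, b⟩ := p
  induction a using QuotientAddGroup.induction_on with | H x =>
  induction b using QuotientAddGroup.induction_on with | H y =>
  have hphi : phi ((x : AddCircle (2 * Real.pi)), (y : AddCircle Real.pi))
      = (((x - Real.pi + 2 * y : ℝ) : AddCircle (2 * Real.pi)), (y : AddCircle Real.pi)) := by
    rw [phi, dbl_coe]
    rfl
  have hsign : (-1 : ℂ) ^ k.1 = Complex.exp ((k.1 : ℂ) * (-(Real.pi * Complex.I))) := by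
    rw [Complex.exp_int_mul, Complex.exp_neg, Complex.exp_pi_mul_I]
    norm_num
  rw [hphi, eB, eB, fourier_coe_apply, fourier_coe_apply, fourier_coe_apply, fourier_coe_apply,
    hsign, ← Complex.exp_add, ← Complex.exp_add, ← Complex.exp_add]
  have hpi : (Real.pi : ℂ) ≠ 0 := Complex.ofReal_ne_zero.mpr Real.pi_ne_zero
  congr 1
  push_cast
  field_simp
  ring

lemma coef_Cphi (k : ℤ × ℤ) (h : Omg → ℂ) :
    coef k (Cphi h) = (-1 : ℂ) ^ k.1 * coef (k.1, k.2 - k.1) h := by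
  set c : ℂ := (-1 : ℂ) ^ k.1
  have hconj : ∀ p,
      (starRingEnd ℂ) (eB k p) = c * (starRingEnd ℂ) (eB (k.1, k.2 - k.1) (phi p)) := by
    intro p
    have hc : c * c = 1 := by
      rw [← zpow_add₀ (by norm_num), ← two_mul, zpow_mul]
      norm_num
    rw [eB_phi, map_mul, map_zpow₀, map_neg, map_one, ← mul_assoc, hc, one_mul]
  unfold coef Cphi
  simp_rw [hconj, mul_left_comm _ c]
  rw [integral_const_mul, measurePreserving_phi.integral_comp measurableEmbedding_phi
    (fun q => h q * (starRingEnd ℂ) (eB (k.1, k.2 - k.1) q))]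

lemma coef_iterate_Cphi (n : ℕ) (k : ℤ × ℤ) (h : Omg → ℂ) :
    coef k (Cphi^[n] h) = (-1 : ℂ) ^ ((n : ℤ) * k.1) * coef (k.1, k.2 - n * k.1) h := by
  induction n generalizing h with
  | zero => simp
  | succ n ih =>
    rw [Function.iterate_succ_apply, ih, coef_Cphi, ← mul_assoc,
      ← zpow_add₀ (by norm_num : (-1 : ℂ) ≠ 0)]
    congr 3 <;> push_cast <;> ring

lemma MeasureTheory.MemLp.iterate_Cphi {h : Omg → ℂ} (hh : MemLp h 2 mOmg) (n : ℕ) :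
    MemLp (Cphi^[n] h) 2 mOmg := by
  induction n generalizing h with
  | zero => exact hh
  | succ n ih => exact ih (hh.comp_measurePreserving measurePreserving_phi)

lemma coef_finsetSum {ι : Type*} (s : Finset ι) (c : ι → ℂ) {h : ι → Omg → ℂ}
    (hh : ∀ j ∈ s, Integrable (h j) mOmg) (k : ℤ × ℤ) :
    coef k (fun p => ∑ j ∈ s, c j * h j p) = ∑ j ∈ s, c j * coef k (h j) := by
  have hint : ∀ j ∈ s, Integrable (fun p => c j * (h j p * (starRingEnd ℂ) (eB k p))) mOmg := by
    intro j hj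
    refine ((hh j hj).mul_bdd (c := 1) ((continuous_eB k).star.aestronglyMeasurable)
      (ae_of_all _ fun p => (RCLike.norm_conj _).trans_le (norm_eB k p).le)).const_mul _
  simp_rw [coef, Finset.sum_mul, mul_assoc, ← integral_const_mul]
  exact integral_finsetSum s hint

lemma sum_choose_mul_symbol (m n : ℕ) (k : ℤ × ℤ) :
    ∑ j ∈ Finset.range (m + 1), (m.choose j : ℂ) * (2 * (n : ℂ)) ^ (m - j) *
      ((Complex.I * (k.1 : ℂ)) ^ (m - j) * (2 * Complex.I * ((k.2 - n * k.1 : ℤ) : ℂ)) ^ j)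
      = (2 * Complex.I * (k.2 : ℂ)) ^ m := by
  rw [show 2 * Complex.I * (k.2 : ℂ)
      = 2 * Complex.I * ((k.2 - n * k.1 : ℤ) : ℂ) + 2 * n * (Complex.I * k.1) by push_cast; ring,
    add_pow]
  refine Finset.sum_congr rfl fun j _ => ?_
  rw [mul_pow]
  ring

theorem stmt18_general (m n : ℕ) (f : Omg → ℂ)
    (g : ℕ → Omg → ℂ) (hg : ∀ j ≤ m, IsD (m - j) j f (g j)) :
    IsD 0 m (Cphi^[n] f)
      (fun p => ∑ j ∈ Finset.range (m + 1),
        (m.choose j : ℂ) * (2 * (n : ℂ)) ^ (m - j) * Cphi^[n] (g j) p) := by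
  have hg' : ∀ j ∈ Finset.range (m + 1), IsD (m - j) j f (g j) :=
    fun j hj => hg j (Finset.mem_range_succ_iff.mp hj)
  have hgL2 : ∀ j ∈ Finset.range (m + 1), MemLp (Cphi^[n] (g j)) 2 mOmg :=
    fun j hj => (hg' j hj).2.1.iterate_Cphi n
  refine ⟨(hg 0 m.zero_le).1.iterate_Cphi n,
    memLp_finsetSum _ fun j hj => (hgL2 j hj).const_mul _, fun k => ?_⟩
  rw [coef_finsetSum _ _ fun j hj => (hgL2 j hj).integrable one_le_two, coef_iterate_Cphi,
    pow_zero, one_mul, ← sum_choose_mul_symbol m n k, Finset.sum_mul]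
  refine Finset.sum_congr rfl fun j hj => ?_
  rw [coef_iterate_Cphi, (hg' j hj).2.2]
  push_cast
  ring

/-- Lemma 2.5(ii):
`D_y^m C_φ^n = ∑_{j=0}^m binom(m,j) (2n)^{m−j} C_φ^n D_x^{m−j} D_y^j`. -/
theorem stmt18 (m n : ℕ) (hm : 1 ≤ m) (hn : 1 ≤ n) (f : Omg → ℂ)
    (hf : MemHs ((m : ℝ), (m : ℝ)) f)
    (g : ℕ → Omg → ℂ) (hg : ∀ j ≤ m, IsD (m - j) j f (g j)) :
    IsD 0 m (Cphi^[n] f)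
      (fun p => ∑ j ∈ Finset.range (m + 1),
        (m.choose j : ℂ) * (2 * (n : ℂ)) ^ (m - j) * Cphi^[n] (g j) p) :=
  stmt18_general m n f g hg
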